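/- (Summed surrogate majorization for the negative Bernoulli log-likelihood.) Let I be a finite index set, q : I → {-1, 1}, and x, x₀ : I → ℝ. Define z₀(i) = x₀(i) + 4·q(i)·(1 - π(q(i)·x₀(i))), where π(u) = exp(u)/(exp(u)+1). Then ∑_{i ∈ I} -log(π(q(i)·x(i))) ≤ ∑_{i ∈ I} [ -log(π(q(i)·x₀(i))) + (1/8)·(x(i) - z₀(i))² ]. -/

import Mathlib

/-! The negative log-likelihood `f u = -log π(u)` has derivative `π u - 1` and second derivative
`π u (1 - π u) ≤ 1/4`, so `u ↦ u² / 8 - f u` is convex and `f` lies below its quadratic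
majorizer with curvature `1/4` at any point `t`. Completing the square, that majorizer is
`f t + (s - z)² / 8` up to a nonpositive term, where `z = t + 4 (1 - π t)` is a gradient step.
Since `q² = 1`, the substitution `s = q x`, `t = q x₀` turns `z` into `q z₀`. -/

/-- The logistic function π(u) = exp(u)/(exp(u)+1). -/
noncomputable def logistic (x : ℝ) : ℝ := Real.exp x / (Real.exp x + 1)

open Real Set

theorem le_add_deriv_mul_add_sq_of_monotone {f f' : ℝ → ℝ} {L : ℝ}
    (hf : ∀ u, HasDerivAt f (f' u) u) (hL : Monotone fun u => L * u - f' u) (t s : ℝ) :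
    f s ≤ f t + f' t * (s - t) + L / 2 * (s - t) ^ 2 := by
  set g : ℝ → ℝ := fun u => f t + f' t * (u - t) + L / 2 * (u - t) ^ 2 - f u
  have hg : ∀ u, HasDerivAt g ((L * u - f' u) - (L * t - f' t)) u := fun u => by
    have hu : HasDerivAt (fun u : ℝ => u - t) 1 u := (hasDerivAt_id u).sub_const t
    refine ((((hu.const_mul (f' t)).const_add (f t)).add ((hu.pow 2).const_mul (L / 2))).sub
      (hf u)).congr_deriv ?_
    ring
  have hgd : Differentiable ℝ g := fun u => (hg u).differentiableAt
  have hmin : IsMinOn g univ t :=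
    isMinOn_univ_of_deriv hgd.continuous.continuousAt hgd.differentiableOn hgd.differentiableOn
      (fun u hu => by rw [(hg u).deriv]; exact sub_nonpos.2 (hL (le_of_lt hu)))
      (fun u hu => by rw [(hg u).deriv]; exact sub_nonneg.2 (hL (le_of_lt hu)))
  have hts : g t ≤ g s := hmin (mem_univ s)
  simp only [g, sub_self, mul_zero, add_zero, zero_pow two_ne_zero] at hts
  linarith

theorem logistic_eq_sigmoid : logistic = sigmoid := by
  funext x
  rw [logistic, sigmoid_def, exp_neg]
  field_simp

theorem hasDerivAt_neg_log_sigmoid (u : ℝ) :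
    HasDerivAt (fun u => -log (sigmoid u)) (sigmoid u - 1) u := by
  refine ((hasDerivAt_sigmoid u).log (sigmoid_pos u).ne').neg.congr_deriv ?_
  field_simp [(sigmoid_pos u).ne']
  ring

theorem monotone_quarter_mul_sub_sigmoid : Monotone fun u => 1 / 4 * u - (sigmoid u - 1) := by
  have hd : ∀ u, HasDerivAt (fun u => 1 / 4 * u - (sigmoid u - 1))
      (1 / 4 - sigmoid u * (1 - sigmoid u)) u := fun u =>
    ((hasDerivAt_id u).const_mul _ |>.sub ((hasDerivAt_sigmoid u).sub_const 1)).congr_deriv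
      (by ring)
  refine monotone_of_deriv_nonneg (fun u => (hd u).differentiableAt) fun u => ?_
  rw [(hd u).deriv]
  nlinarith [sq_nonneg (sigmoid u - 1 / 2)]

theorem neg_log_logistic_mul_le {q : ℝ} (hq : q = -1 ∨ q = 1) (x x₀ : ℝ) :
    -log (logistic (q * x)) ≤
      -log (logistic (q * x₀)) + 1 / 8 * (x - (x₀ + 4 * q * (1 - logistic (q * x₀)))) ^ 2 := by
  have hq2 : q ^ 2 = 1 := by rcases hq with rfl | rfl <;> norm_num
  have hmaj := le_add_deriv_mul_add_sq_of_monotone hasDerivAt_neg_log_sigmoid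
    monotone_quarter_mul_sub_sigmoid (q * x₀) (q * x)
  rw [logistic_eq_sigmoid]
  set p := sigmoid (q * x₀)
  have hsquare : 1 / 8 * (x - (x₀ + 4 * q * (1 - p))) ^ 2 =
      (p - 1) * (q * x - q * x₀) + 1 / 4 / 2 * (q * x - q * x₀) ^ 2 + 2 * (p - 1) ^ 2 := by
    linear_combination (-(1 / 8) * ((x - x₀) ^ 2 - 16 * (1 - p) ^ 2)) * hq2
  linarith [sq_nonneg (p - 1)]

/-- Summed surrogate majorization for the negative Bernoulli
log-likelihood. With z₀(i) = x₀(i) + 4q(i)(1 - π(q(i)x₀(i))),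
∑ᵢ -log(π(q(i)x(i))) ≤ ∑ᵢ [-log(π(q(i)x₀(i))) + (1/8)(x(i) - z₀(i))²]. -/
theorem summed_surrogate_majorization {I : Type*} [Fintype I]
    (q x x₀ : I → ℝ) (hq : ∀ i, q i = -1 ∨ q i = 1)
    (z₀ : I → ℝ)
    (hz₀ : ∀ i, z₀ i = x₀ i + 4 * q i * (1 - logistic (q i * x₀ i))) :
    ∑ i, -Real.log (logistic (q i * x i)) ≤
      ∑ i, (-Real.log (logistic (q i * x₀ i))
              + (1 / 8) * (x i - z₀ i) ^ 2) :=
  Finset.sum_le_sum fun i _ => hz₀ i ▸ neg_log_logistic_mul_le (hq i) (x i) (x₀ i)
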